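/- Let A be a C*-algebra, X a (right) Hilbert A-module and φ : A → B(X) a left action. If there exists a closed two-sided ideal J of A such that the restriction of φ to J is a bijection from J onto K(X), then J = J_X = φ⁻¹(K(X)) ∩ (ker φ)^⊥. -/

import Mathlib

open scoped RightActions

/-- The Hilbert C⋆-module class as it stood in Mathlib of December 2024 (right `A`-module
structure via `SMul Aᵐᵒᵖ E`); Mathlib's `CStarModule` now uses a left action `SMul A E`. -/
class CStarModuleRight (A E : Type*) [NonUnitalSemiring A] [StarRing A] [Module ℂ A]
    [AddCommGroup E] [Module ℂ E] [PartialOrder A] [SMul Aᵐᵒᵖ E] [Norm A] [Norm E]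
    extends Inner A E where
  inner_add_right {x} {y} {z} : inner x (y + z) = inner x y + inner x z
  inner_self_nonneg {x} : 0 ≤ inner x x
  inner_self {x} : inner x x = 0 ↔ x = 0
  inner_op_smul_right {a : A} {x y : E} : inner x (y <• a) = inner x y * a
  inner_smul_right_complex {z : ℂ} {x} {y} : inner x (z • y) = z • inner x y
  star_inner x y : star (inner x y) = inner y x
  norm_eq_sqrt_norm_inner_self x : ‖x‖ = √‖inner x x‖

variable {A X : Type*} [NonUnitalCStarAlgebra A] [PartialOrder A] [StarOrderedRing A]
  [NormedAddCommGroup X] [NormedSpace ℂ X] [SMul Aᵐᵒᵖ X] [CStarModuleRight A X] [CompleteSpace X]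

/-- `K(X)`: the closed linear span in `B(X)` of the rank-one operators
`θ_{ξ,η} : ζ ↦ ξ • ⟪η, ζ⟫`. -/
def compactOps (A X : Type*) [NonUnitalCStarAlgebra A] [PartialOrder A] [StarOrderedRing A]
    [NormedAddCommGroup X] [NormedSpace ℂ X] [SMul Aᵐᵒᵖ X] [CStarModuleRight A X]
    [CompleteSpace X] : Set (X →L[ℂ] X) :=
  closure (Submodule.span ℂ
    {T : X →L[ℂ] X | ∃ ξ η : X, ∀ ζ : X, T ζ = ξ <• (inner A η ζ : A)} : Set (X →L[ℂ] X))

/-- The ideal `J_X = φ⁻¹(K(X)) ∩ (ker φ)^⊥` of Katsura, as a subset of `A`. -/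
def KatsuraIdeal (φ : A →ₙₐ[ℂ] (X →L[ℂ] X)) : Set A :=
  {a : A | φ a ∈ compactOps A X} ∩ {a : A | ∀ b : A, φ b = 0 → a * b = 0}

/-!
If `a ∈ J_X`, surjectivity gives `c ∈ J` with `φ a = φ c`. Injectivity of `φ` on `J` shows that
`c`, like `a`, annihilates `ker φ`; hence so does `x = a - c`, which also lies in `ker φ`. Then
`x⋆ x ∈ ker φ` gives `x x⋆ x = 0`, and the C⋆-identity forces `x = 0`.
-/

theorem CStarRing.mul_star_mul_self_eq_zero_iff {E : Type*} [NonUnitalNormedRing E] [StarRing E]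
    [CStarRing E] (x : E) : x * (star x * x) = 0 ↔ x = 0 := by
  refine ⟨fun h => ?_, fun h => by simp [h]⟩
  have : star (star x * x) * (star x * x) = 0 := by
    rw [star_mul, star_star, mul_assoc, h, mul_zero]
  rwa [star_mul_self_eq_zero_iff, star_mul_self_eq_zero_iff] at this

theorem TwoSidedIdeal.mul_eq_zero_of_injOn {R S F : Type*} [NonUnitalNonAssocRing R]
    [NonUnitalNonAssocSemiring S] [FunLike F R S] [NonUnitalRingHomClass F R S] {f : F}
    {J : TwoSidedIdeal R} (hf : Set.InjOn f J) {a b : R} (ha : a ∈ J) (hb : f b = 0) :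
    a * b = 0 :=
  hf (J.mul_mem_right a b ha) J.zero_mem (by rw [map_mul, hb, mul_zero, map_zero])

theorem CStarRing.eq_of_map_eq_of_annihilates_ker {R S F : Type*} [NonUnitalNormedRing R]
    [StarRing R] [CStarRing R] [NonUnitalNonAssocRing S] [FunLike F R S]
    [NonUnitalRingHomClass F R S] {f : F} {a c : R} (ha : ∀ b, f b = 0 → a * b = 0)
    (hc : ∀ b, f b = 0 → c * b = 0) (hac : f a = f c) : a = c := by
  have hker : f (star (a - c) * (a - c)) = 0 := by rw [map_mul, map_sub, hac, sub_self, mul_zero]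
  have hx : (a - c) * (star (a - c) * (a - c)) = 0 := by
    rw [sub_mul, ha _ hker, hc _ hker, sub_zero]
  exact sub_eq_zero.mp ((mul_star_mul_self_eq_zero_iff _).mp hx)

theorem eq_katsuraIdeal_of_bijOn_general (φ : A →ₙₐ[ℂ] (X →L[ℂ] X))
    (J : TwoSidedIdeal A)
    (hbij : Set.BijOn φ (J : Set A) (compactOps A X)) :
    (J : Set A) = KatsuraIdeal φ := by
  have annihilates_ker {c : A} (hc : c ∈ J) : ∀ b, φ b = 0 → c * b = 0 :=
    fun _ hb => J.mul_eq_zero_of_injOn hbij.injOn hc hb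
  ext a
  refine ⟨fun ha => ⟨hbij.mapsTo ha, annihilates_ker ha⟩, fun ⟨hK, ha⟩ => ?_⟩
  obtain ⟨c, hc, hca⟩ := hbij.surjOn hK
  rwa [CStarRing.eq_of_map_eq_of_annihilates_ker ha (annihilates_ker hc) hca.symm]

/-- If `J` is a closed two-sided ideal of `A` such that the left action `φ` restricts to a
bijection from `J` onto `K(X)`, then `J = J_X = φ⁻¹(K(X)) ∩ (ker φ)^⊥`. -/
theorem eq_katsuraIdeal_of_bijOn (φ : A →ₙₐ[ℂ] (X →L[ℂ] X))
    (hmod : ∀ (a : A) (ξ : X) (b : A), φ a (ξ <• b) = (φ a ξ) <• b)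
    (hadj : ∀ (a : A) (ξ η : X), (inner A (φ a ξ) η : A) = inner A ξ (φ (star a) η))
    (J : TwoSidedIdeal A) (hJ : IsClosed (J : Set A))
    (hbij : Set.BijOn φ (J : Set A) (compactOps A X)) :
    (J : Set A) = KatsuraIdeal φ :=
  eq_katsuraIdeal_of_bijOn_general φ J hbij
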